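/- arXiv:2108.03630 — 2 statements merged into one kernel-verified Lean document; each statement's English description precedes it below -/
import Mathlib

section
/- Let r be a rational function of degree N and let f, g ∈ 𝔏(r). For α ∈ Ω(r) with distinct roots w_1(α), …, w_N(α) of r(z) = α, the sum Σ_{n=1}^N f(w_n(α)) g(w_n(α)) / r′(w_n(α)) is independent of α ∈ Ω(r). -/
/-!
On the fibre `r = α` put `P = p - α q`, so that the `w n` are roots of `P` and
`Qₙ = P / (X - wₙ)` is, up to a nonzero constant, the `n`-th Lagrange basis polynomial of the
nodes. Both `dq a (wₙ) = Qₙ(a) / q(a)` and `r'(wₙ) = Qₙ(wₙ) / q(wₙ)` are read off `Qₙ`, and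
`q(wₙ) Qₙ(b)` is the value at `wₙ` of the Bezoutian `(q(b) p - p(b) q) / (X - b)`, in which `α`
cancels. Hence the sum for `f = dq a`, `g = dq b` is the Lagrange interpolation formula for the
Bezoutian (of degree `< N`) evaluated at `a`, divided by `q(a) q(b)`; it does not depend on `α`,
and bilinearity extends this to the span of the difference quotients.
-/

open Polynomial

noncomputable section

/-- The rational function `r = p/q`, evaluated pointwise. -/
def ratEval (p q : Polynomial ℂ) (z : ℂ) : ℂ := p.eval z / q.eval z

/-- The difference quotient `z ↦ (r(z) − r(a))/(z − a)` (equal to `r′(a)` at `z = a`). -/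
def dq (p q : Polynomial ℂ) (a : ℂ) : ℂ → ℂ :=
  fun z => if z = a then deriv (ratEval p q) a
           else (ratEval p q z - ratEval p q a) / (z - a)

/-- The state space `𝔏(r)`: the span of the difference quotients of `r = p/q`. -/
def stateSpace (p q : Polynomial ℂ) : Submodule ℂ (ℂ → ℂ) :=
  Submodule.span ℂ {f | ∃ a : ℂ, q.eval a ≠ 0 ∧ f = dq p q a}

open Finset

namespace Polynomial

variable {F : Type*} [Field F]

theorem eval_divByMonic_X_sub_C_self (f : F[X]) (a : F) :
    (f /ₘ (X - C a)).eval a = f.derivative.eval a := by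
  simpa using congrArg (eval a) (divByMonic_add_X_sub_C_mul_derivative_divByMonic_eq_derivative f a)

theorem eval_divByMonic_X_sub_C_of_ne (f : F[X]) {a z : F} (h : z ≠ a) :
    (f /ₘ (X - C a)).eval z = (f.eval z - f.eval a) / (z - a) := by
  have := congrArg (eval z) (X_sub_C_mul_divByMonic_eq_sub_modByMonic f a)
  rw [modByMonic_X_sub_C_eq_C_eval] at this
  simp only [eval_mul, eval_sub, eval_X, eval_C] at this
  rw [eq_div_iff (sub_ne_zero.mpr h), ← this, mul_comm]

theorem degree_divByMonic_X_sub_C_lt {f : F[X]} {n : ℕ} (hn : 0 < n) (hf : f.natDegree ≤ n)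
    (a : F) : (f /ₘ (X - C a)).degree < n := by
  refine degree_le_natDegree.trans_lt ?_
  rw [natDegree_divByMonic f (monic_X_sub_C a), natDegree_X_sub_C]
  exact_mod_cast (by omega)

variable {ι : Type*} [Fintype ι] {P : F[X]} {w : ι → F}

theorem divByMonic_X_sub_C_eq_C_mul_basis [DecidableEq ι] (hP : P.natDegree ≤ Fintype.card ι)
    (hw : Function.Injective w) (hroot : ∀ i, P.IsRoot (w i)) (i : ι) :
    P /ₘ (X - C (w i)) = C ((P /ₘ (X - C (w i))).eval (w i)) * Lagrange.basis univ w i := by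
  have hcard : 0 < #(univ : Finset ι) := card_pos.mpr ⟨i, mem_univ i⟩
  refine eq_of_degrees_lt_of_eval_index_eq univ hw.injOn ?_ ?_ fun j _ => ?_
  · exact degree_divByMonic_X_sub_C_lt hcard (by simpa using hP) _
  · rw [← smul_eq_C_mul]
    refine (degree_smul_le _ _).trans_lt ?_
    rw [Lagrange.degree_basis hw.injOn (mem_univ i)]
    exact_mod_cast (by omega)
  · rcases eq_or_ne j i with rfl | hji
    · rw [eval_mul, eval_C, Lagrange.eval_basis_self hw.injOn (mem_univ j), mul_one]
    · rw [eval_mul, Lagrange.eval_basis_of_ne hji.symm (mem_univ j), mul_zero,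
        eval_divByMonic_X_sub_C_of_ne _ (hw.ne hji), (hroot j).eq_zero, (hroot i).eq_zero,
        sub_zero, zero_div]

theorem eval_divByMonic_X_sub_C_ne_zero (hP0 : P ≠ 0) (hP : P.natDegree ≤ Fintype.card ι)
    (hw : Function.Injective w) (hroot : ∀ i, P.IsRoot (w i)) (i : ι) :
    (P /ₘ (X - C (w i))).eval (w i) ≠ 0 := by
  classical
  intro h
  have hQ := divByMonic_X_sub_C_eq_C_mul_basis hP hw hroot i
  rw [h, C_0, zero_mul] at hQ
  apply hP0
  rw [← mul_divByMonic_eq_iff_isRoot.mpr (hroot i), hQ, mul_zero]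

theorem sum_eval_mul_eval_divByMonic_div (hP0 : P ≠ 0) (hP : P.natDegree ≤ Fintype.card ι)
    (hw : Function.Injective w) (hroot : ∀ i, P.IsRoot (w i)) {G : F[X]}
    (hG : G.degree < Fintype.card ι) (a : F) :
    ∑ i, G.eval (w i) * (P /ₘ (X - C (w i))).eval a / (P /ₘ (X - C (w i))).eval (w i)
      = G.eval a := by
  classical
  have hG' : G.degree < #(univ : Finset ι) := by simpa using hG
  conv_rhs => rw [Lagrange.eq_interpolate hw.injOn hG', Lagrange.interpolate_apply, eval_finsetSum]
  refine sum_congr rfl fun i _ => ?_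
  rw [divByMonic_X_sub_C_eq_C_mul_basis hP hw hroot i, eval_mul, eval_mul, eval_mul, eval_C,
    eval_C, eval_C, Lagrange.eval_basis_self hw.injOn (mem_univ i), mul_one]
  have := eval_divByMonic_X_sub_C_ne_zero hP0 hP hw hroot i
  field_simp

end Polynomial

namespace LinearMap

variable {R M N P : Type*} [CommSemiring R] [AddCommMonoid M] [AddCommMonoid N] [AddCommMonoid P]
  [Module R M] [Module R N] [Module R P]

theorem eqOn_span₂ {B B' : M →ₗ[R] N →ₗ[R] P} {s : Set M} {t : Set N}
    (h : ∀ x ∈ s, ∀ y ∈ t, B x y = B' x y) {x : M} {y : N} (hx : x ∈ Submodule.span R s)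
    (hy : y ∈ Submodule.span R t) : B x y = B' x y :=
  eqOn_span (f := B.flip y) (g := B'.flip y)
    (fun x' hx' => eqOn_span (fun y' hy' => h x' hx' y' hy') hy) hx

end LinearMap

section

variable (p q : ℂ[X])

def bezoutian (b : ℂ) : ℂ[X] := (C (q.eval b) * p - C (p.eval b) * q) /ₘ (X - C b)

def fibreForm {ι : Type*} [Fintype ι] (w : ι → ℂ) : (ℂ → ℂ) →ₗ[ℂ] (ℂ → ℂ) →ₗ[ℂ] ℂ :=
  LinearMap.mk₂ ℂ (fun f g => ∑ i, f (w i) * g (w i) / deriv (ratEval p q) (w i))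
    (fun f f' g => by simp only [Pi.add_apply, add_mul, add_div, sum_add_distrib])
    (fun c f g => by simp only [Pi.smul_apply, smul_eq_mul, mul_sum, mul_assoc, mul_div_assoc])
    (fun f g g' => by simp only [Pi.add_apply, mul_add, add_div, sum_add_distrib])
    (fun c f g => by simp only [Pi.smul_apply, smul_eq_mul, mul_sum]; congr! 1; ring)

variable {p q}

theorem deriv_ratEval {a : ℂ} (ha : q.eval a ≠ 0) :
    deriv (ratEval p q) a =
      (p.derivative.eval a * q.eval a - p.eval a * q.derivative.eval a) / q.eval a ^ 2 :=
  ((p.hasDerivAt a).div (q.hasDerivAt a) ha).deriv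

theorem dq_eq_eval_divByMonic {a w : ℂ} (ha : q.eval a ≠ 0) (hw : q.eval w ≠ 0) :
    dq p q a w = ((p - C (ratEval p q w) * q) /ₘ (X - C w)).eval a / q.eval a := by
  rcases eq_or_ne w a with rfl | hwa
  · rw [dq, if_pos rfl, deriv_ratEval hw, eval_divByMonic_X_sub_C_self]
    simp only [derivative_sub, derivative_C_mul, eval_sub, eval_mul, eval_C, ratEval]
    field_simp
  · rw [dq, if_neg hwa, eval_divByMonic_X_sub_C_of_ne _ hwa.symm]
    simp only [eval_sub, eval_mul, eval_C, ratEval]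
    field_simp [sub_ne_zero.mpr hwa, sub_ne_zero.mpr hwa.symm]
    ring

theorem mul_eval_divByMonic_eq_eval_bezoutian {w : ℂ} (hw : q.eval w ≠ 0) (b : ℂ) :
    q.eval w * ((p - C (ratEval p q w) * q) /ₘ (X - C w)).eval b = (bezoutian p q b).eval w := by
  rcases eq_or_ne b w with rfl | hbw
  · rw [bezoutian, eval_divByMonic_X_sub_C_self, eval_divByMonic_X_sub_C_self]
    simp only [derivative_sub, derivative_C_mul, eval_sub, eval_mul, eval_C, ratEval]
    field_simp
  · rw [bezoutian, eval_divByMonic_X_sub_C_of_ne _ hbw, eval_divByMonic_X_sub_C_of_ne _ hbw.symm]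
    simp only [eval_sub, eval_mul, eval_C, ratEval]
    field_simp [sub_ne_zero.mpr hbw, sub_ne_zero.mpr hbw.symm]
    ring

theorem sub_C_mul_ne_zero_of_isCoprime (hco : IsCoprime p q) (hp : p.natDegree ≠ 0) (α : ℂ) :
    p - C α * q ≠ 0 := by
  intro h
  rw [sub_eq_zero] at h
  have hq : q.natDegree = 0 := natDegree_eq_zero_of_isUnit <|
    isCoprime_self.mp (IsCoprime.of_mul_left_right (h ▸ hco))
  exact hp (Nat.eq_zero_of_le_zero (h ▸ (natDegree_C_mul_le α q).trans hq.le))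

theorem fibreForm_dq_dq {ι : Type*} [Fintype ι] (hco : IsCoprime p q)
    (hcard : Fintype.card ι = p.natDegree) (hpos : 0 < p.natDegree)
    (hdeg : q.natDegree ≤ p.natDegree) {α : ℂ} {w : ι → ℂ} (hw : Function.Injective w)
    (hrw : ∀ i, p.eval (w i) = α * q.eval (w i)) (hqw : ∀ i, q.eval (w i) ≠ 0)
    {a b : ℂ} (ha : q.eval a ≠ 0) (hb : q.eval b ≠ 0) :
    fibreForm p q w (dq p q a) (dq p q b) = (bezoutian p q b).eval a / (q.eval a * q.eval b) := by
  have hrα : ∀ i, ratEval p q (w i) = α := fun i => by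
    rw [ratEval, hrw, mul_div_cancel_right₀ _ (hqw i)]
  have hroot : ∀ i, (p - C α * q).IsRoot (w i) := fun i => by simp [hrw]
  have hPdeg : (p - C α * q).natDegree ≤ Fintype.card ι :=
    hcard ▸ (natDegree_sub_le _ _).trans (max_le le_rfl ((natDegree_C_mul_le α q).trans hdeg))
  have hbez : (bezoutian p q b).degree < Fintype.card ι :=
    hcard ▸ degree_divByMonic_X_sub_C_lt hpos ((natDegree_sub_le _ _).trans
      (max_le (natDegree_C_mul_le _ p) ((natDegree_C_mul_le _ q).trans hdeg))) b
  simp only [fibreForm, LinearMap.mk₂_apply]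
  rw [← sum_eval_mul_eval_divByMonic_div (sub_C_mul_ne_zero_of_isCoprime hco hpos.ne' α) hPdeg hw
    hroot hbez a, sum_div]
  refine sum_congr rfl fun i _ => ?_
  have hderiv : deriv (ratEval p q) (w i) = dq p q (w i) (w i) := (if_pos rfl).symm
  rw [hderiv, dq_eq_eval_divByMonic ha (hqw i), dq_eq_eval_divByMonic hb (hqw i),
    dq_eq_eval_divByMonic (hqw i) (hqw i), ← mul_eval_divByMonic_eq_eval_bezoutian (hqw i), hrα]
  field_simp

end

/-- for `f, g ∈ 𝔏(r)` the sum `Σₙ f(wₙ(α)) g(wₙ(α))/r′(wₙ(α))`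
over the distinct preimages of `α ∈ Ω(r)` does not depend on `α`. -/
theorem stmt10 (p q : Polynomial ℂ) (hco : IsCoprime p q) (N : ℕ)
    (hN : p.natDegree = N) (hdeg : q.natDegree ≤ p.natDegree)
    (f g : ℂ → ℂ) (hf : f ∈ stateSpace p q) (hg : g ∈ stateSpace p q)
    (α β : ℂ)
    (w : Fin N → ℂ) (hw : Function.Injective w)
    (hrw : ∀ n, p.eval (w n) = α * q.eval (w n)) (hqw : ∀ n, q.eval (w n) ≠ 0)
    (v : Fin N → ℂ) (hv : Function.Injective v)
    (hrv : ∀ n, p.eval (v n) = β * q.eval (v n)) (hqv : ∀ n, q.eval (v n) ≠ 0) :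
    ∑ n : Fin N, f (w n) * g (w n) / deriv (ratEval p q) (w n)
      = ∑ n : Fin N, f (v n) * g (v n) / deriv (ratEval p q) (v n) := by
  rcases N.eq_zero_or_pos with rfl | hpos
  · simp
  have hcard : Fintype.card (Fin N) = p.natDegree := by rw [Fintype.card_fin, hN]
  refine LinearMap.eqOn_span₂ (B := fibreForm p q w) (B' := fibreForm p q v) ?_ hf hg
  rintro _ ⟨a, ha, rfl⟩ _ ⟨b, hb, rfl⟩
  rw [fibreForm_dq_dq hco hcard (hN ▸ hpos) hdeg hw hrw hqw ha hb,
    fibreForm_dq_dq hco hcard (hN ▸ hpos) hdeg hv hrv hqv ha hb]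

end
end

section
/- Let r be a rational function of degree N, α ∈ Ω(r), and let a, b ∈ ℂ with a − α b ≠ 0. Then the function f(z) = Z_r(z) c / (a − r(z) b), for any nonzero c ∈ ℂ^N, is an eigenvector of R^{(r)}_α with eigenvalue b/(a − α b). Conversely, every eigenvector of R^{(r)}_α on the space of functions of the form Z_r(z) F(r(z)) (F analytic near α) is of this form. -/
/-!
Put `P = p - α q`, so that `r - α = P/q` and `r′(w_n) = P′(w_n)/q(w_n)`. Every element of `𝔏(r)`
is `G/q` with `deg G < N`, and `P` is a constant multiple of `∏ₙ (z - w_n)`, so Lagrange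
interpolation of `G` at the nodes `w_n` says exactly that `R_α` annihilates `𝔏(r)`. Hence
`R_α f = (f - g)/(r - α)` whenever `g ∈ 𝔏(r)` agrees with `f` on `r⁻¹(α)`, which gives the
eigenvalue at once.

Conversely, for `f = Z_r F(r)` the eigen-equation reads `f (1 - μ(r - α)) = Z_r F(α)`. Outside
the finitely many critical values of `r` (and `r(∞)`) each fibre `r⁻¹(t)` has `N` points, and an
element of `𝔏(r)` vanishing at `N` points vanishes identically; so
`Z_r (F(t)(1 - μ(t - α)) - F(α)) = 0` for generic `t ∈ U`, hence by continuity for all `t ∈ U`.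
Taking `t = r(z)` gives `f = Z_r F(α)/(1 - μ(r - α))`, i.e. `a = 1 + μα`, `b = μ`, `c = F(α)`.
-/

open Polynomial

noncomputable section

/-- The generalized backward-shift operator `R^{(r)}_α`. -/
def Rop (p q : Polynomial ℂ) (α : ℂ) {N : ℕ} (w : Fin N → ℂ) (f : ℂ → ℂ) : ℂ → ℂ :=
  fun z => f z / (ratEval p q z - α)
    - ∑ n : Fin N, f (w n) / (deriv (ratEval p q) (w n) * (z - w n))

theorem hasDerivAt_ratEval (p q : ℂ[X]) {x : ℂ} (hx : q.eval x ≠ 0) :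
    HasDerivAt (ratEval p q)
      ((p.derivative.eval x * q.eval x - p.eval x * q.derivative.eval x) / q.eval x ^ 2) x :=
  (p.hasDerivAt x).div (q.hasDerivAt x) hx

theorem ratEval_eq_of_eval_eq {p q : ℂ[X]} {α x : ℂ} (hqx : q.eval x ≠ 0)
    (hpx : p.eval x = α * q.eval x) : ratEval p q x = α := by
  rw [ratEval, hpx, mul_div_cancel_right₀ α hqx]

theorem ratEval_sub_eq_eval_div {p q : ℂ[X]} (α : ℂ) {z : ℂ} (hz : q.eval z ≠ 0) :
    ratEval p q z - α = (p - C α * q).eval z / q.eval z := by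
  rw [ratEval, eval_sub, eval_mul, eval_C, sub_div, mul_div_cancel_right₀ α hz]

theorem deriv_ratEval_of_eval_eq {p q : ℂ[X]} {α x : ℂ} (hqx : q.eval x ≠ 0)
    (hpx : p.eval x = α * q.eval x) :
    deriv (ratEval p q) x = (p - C α * q).derivative.eval x / q.eval x := by
  rw [(hasDerivAt_ratEval p q hqx).deriv, hpx]
  simp only [derivative_sub, derivative_C_mul, eval_sub, eval_mul, eval_C]
  field_simp

/-- `G / q` with `deg G < N`, asked only off the zeros of `q`, where `ratEval` and `dq` are junk. -/
def divDegreeLT {K : Type*} [Field K] (q : K[X]) (N : ℕ) : Submodule K (K → K) where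
  carrier := {f | ∃ G ∈ degreeLT K N, ∀ z, q.eval z ≠ 0 → f z = G.eval z / q.eval z}
  add_mem' := by
    rintro f g ⟨F, hF, hf⟩ ⟨G, hG, hg⟩
    exact ⟨F + G, add_mem hF hG, fun z hz => by simp [hf z hz, hg z hz, add_div]⟩
  zero_mem' := ⟨0, zero_mem _, fun z _ => by simp⟩
  smul_mem' := by
    rintro c f ⟨F, hF, hf⟩
    exact ⟨c • F, Submodule.smul_mem _ c hF, fun z hz => by simp [hf z hz, mul_div_assoc]⟩

theorem dq_mem_divDegreeLT {p q : ℂ[X]} {N : ℕ} (hp : p.natDegree ≤ N) (hq : q.natDegree ≤ N)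
    {a : ℂ} (ha : q.eval a ≠ 0) : dq p q a ∈ divDegreeLT q N := by
  set num := p * C (q.eval a) - C (p.eval a) * q
  set H := num /ₘ (X - C a)
  have hH : (X - C a) * H = num :=
    mul_divByMonic_eq_iff_isRoot.mpr (by simp [num, mul_comm])
  have hHdeg : H ∈ degreeLT ℂ N := by
    rw [mem_degreeLT]
    rcases eq_or_ne num 0 with h0 | h0
    · simp [H, h0]
    refine (degree_divByMonic_lt _ _ h0 (by simp)).trans_le ?_
    exact degree_le_of_natDegree_le <| (natDegree_sub_le_of_le
      ((natDegree_mul_C_le _ _).trans hp) ((natDegree_C_mul_le _ _).trans hq)).trans (max_self N).le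
  refine ⟨(q.eval a)⁻¹ • H, Submodule.smul_mem _ _ hHdeg, fun z hz => ?_⟩
  rw [eval_smul, smul_eq_mul, dq]
  split_ifs with hza
  · subst hza
    have hHa : H.eval z = p.derivative.eval z * q.eval z - p.eval z * q.derivative.eval z := by
      simpa [num] using congrArg (fun P => (derivative P).eval z) hH
    rw [(hasDerivAt_ratEval p q hz).deriv, hHa]
    field_simp
  · have hnum : (z - a) * H.eval z = p.eval z * q.eval a - p.eval a * q.eval z := by
      simpa [num, mul_comm] using congrArg (eval z) hH
    rw [ratEval, ratEval, div_sub_div _ _ hz ha]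
    field_simp [sub_ne_zero.mpr hza]
    linear_combination -hnum

theorem stateSpace_le_divDegreeLT {p q : ℂ[X]} {N : ℕ} (hp : p.natDegree ≤ N)
    (hq : q.natDegree ≤ N) : stateSpace p q ≤ divDegreeLT q N :=
  Submodule.span_le.mpr fun _ ⟨_, ha, hf⟩ => hf ▸ dq_mem_divDegreeLT hp hq ha

namespace Lagrange

variable {F ι : Type*} [Field F] {s : Finset ι} {v : ι → F}

theorem eq_C_coeff_mul_nodal (hvs : Set.InjOn v s) {P : F[X]} (hP : P.natDegree ≤ s.card)
    (hroots : ∀ i ∈ s, P.eval (v i) = 0) : P = C (P.coeff s.card) * nodal s v := by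
  refine eq_of_degree_sub_lt_of_eval_index_eq s hvs ?_ fun i hi => by
    rw [hroots i hi, eval_mul, eval_nodal_at_node hi, mul_zero]
  rw [degree_lt_iff_coeff_zero]
  intro m hm
  rcases hm.eq_or_lt with rfl | hlt
  · rw [coeff_sub, coeff_C_mul, ← natDegree_nodal (v := v), nodal_monic.coeff_natDegree, mul_one,
      sub_self]
  · have hnodal : (nodal s v).natDegree < m := natDegree_nodal (v := v) ▸ hlt
    rw [coeff_sub, coeff_C_mul, coeff_eq_zero_of_natDegree_lt (hP.trans_lt hlt),
      coeff_eq_zero_of_natDegree_lt hnodal, mul_zero, sub_zero]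

theorem eval_div_eq_sum_div (hvs : Set.InjOn v s) {P G : F[X]} (hP : P.natDegree ≤ s.card)
    (hroots : ∀ i ∈ s, P.eval (v i) = 0) (hG : G.degree < s.card) {x : F}
    (hx : ∀ i ∈ s, x ≠ v i) :
    G.eval x / P.eval x = ∑ i ∈ s, G.eval (v i) / (P.derivative.eval (v i) * (x - v i)) := by
  classical
  rw [eq_C_coeff_mul_nodal hvs hP hroots]
  have hnodal := eval_nodal_not_at_node hx
  rw [eq_interpolate hvs hG, eval_interpolate_not_at_node _ hx, eval_mul, eval_C, Finset.mul_sum,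
    Finset.sum_div]
  refine Finset.sum_congr rfl fun i hi => ?_
  rw [nodalWeight_eq_eval_derivative_nodal hi, derivative_mul, derivative_C, zero_mul, zero_add,
    eval_mul, eval_C, eval_interpolate_at_node _ hvs hi]
  field_simp

end Lagrange

section Fiber

variable {p q : ℂ[X]} {N : ℕ} {α : ℂ} {w : Fin N → ℂ}

theorem sum_div_deriv_ratEval_mul_sub (hp : p.natDegree ≤ N) (hq : q.natDegree ≤ N)
    (hw : Function.Injective w) (hroot : ∀ n, p.eval (w n) = α * q.eval (w n))
    (hqw : ∀ n, q.eval (w n) ≠ 0)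
    {g : ℂ → ℂ} (hg : g ∈ divDegreeLT q N) {z : ℂ} (hz : q.eval z ≠ 0)
    (hzα : ratEval p q z ≠ α) :
    ∑ n, g (w n) / (deriv (ratEval p q) (w n) * (z - w n)) = g z / (ratEval p q z - α) := by
  obtain ⟨G, hG, hgG⟩ := hg
  set P := p - C α * q
  have hP : P.natDegree ≤ (Finset.univ : Finset (Fin N)).card := by
    rw [Finset.card_fin]
    exact (natDegree_sub_le_of_le hp ((natDegree_C_mul_le _ _).trans hq)).trans (max_self N).le
  have hPw : ∀ n ∈ Finset.univ, P.eval (w n) = 0 := fun n _ => by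
    simp [P, hroot n]
  have hzw : ∀ n ∈ Finset.univ, z ≠ w n := fun n _ h =>
    hzα (h ▸ ratEval_eq_of_eval_eq (hqw n) (hroot n))
  calc ∑ n, g (w n) / (deriv (ratEval p q) (w n) * (z - w n))
      = ∑ n, G.eval (w n) / (P.derivative.eval (w n) * (z - w n)) := by
        refine Finset.sum_congr rfl fun n _ => ?_
        rw [hgG _ (hqw n), deriv_ratEval_of_eval_eq (hqw n) (hroot n), div_mul_eq_mul_div,
          div_div_div_cancel_right₀ (hqw n)]
    _ = G.eval z / P.eval z := by
        rw [Lagrange.eval_div_eq_sum_div hw.injOn hP hPw (by simpa using mem_degreeLT.mp hG) hzw]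
    _ = g z / (ratEval p q z - α) := by
        rw [hgG z hz, ratEval_sub_eq_eval_div α hz, div_div_div_cancel_right₀ hz]

theorem Rop_apply_of_eq_on_fiber (hp : p.natDegree ≤ N) (hq : q.natDegree ≤ N)
    (hw : Function.Injective w) (hroot : ∀ n, p.eval (w n) = α * q.eval (w n))
    (hqw : ∀ n, q.eval (w n) ≠ 0)
    {f g : ℂ → ℂ} (hg : g ∈ divDegreeLT q N) (hfg : ∀ n, f (w n) = g (w n)) {z : ℂ}
    (hz : q.eval z ≠ 0) (hzα : ratEval p q z ≠ α) :
    Rop p q α w f z = (f z - g z) / (ratEval p q z - α) := by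
  simp only [Rop, hfg, sum_div_deriv_ratEval_mul_sub hp hq hw hroot hqw hg hz hzα, sub_div]

theorem Rop_div_eq_mul (hp : p.natDegree ≤ N) (hq : q.natDegree ≤ N)
    (hw : Function.Injective w) (hroot : ∀ n, p.eval (w n) = α * q.eval (w n))
    (hqw : ∀ n, q.eval (w n) ≠ 0)
    {g : ℂ → ℂ} (hg : g ∈ divDegreeLT q N) {a b : ℂ} (hab : a - α * b ≠ 0) {z : ℂ}
    (hz : q.eval z ≠ 0) (hzα : ratEval p q z ≠ α) (hzab : a - ratEval p q z * b ≠ 0) :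
    Rop p q α w (fun ζ => g ζ / (a - ratEval p q ζ * b)) z
      = b / (a - α * b) * (g z / (a - ratEval p q z * b)) := by
  have hab' : a - b * α ≠ 0 := by rwa [mul_comm]
  rw [Rop_apply_of_eq_on_fiber hp hq hw hroot hqw (Submodule.smul_mem _ (a - α * b)⁻¹ hg)
    (fun n => by simp [ratEval_eq_of_eval_eq (hqw n) (hroot n), div_eq_inv_mul]) hz hzα]
  have hzα' : ratEval p q z - α ≠ 0 := sub_ne_zero.mpr hzα
  simp only [Pi.smul_apply, smul_eq_mul]
  field_simp
  ring

theorem apply_ratEval_mul_eq_of_Rop_eq (hp : p.natDegree ≤ N) (hq : q.natDegree ≤ N)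
    (hw : Function.Injective w) (hroot : ∀ n, p.eval (w n) = α * q.eval (w n))
    (hqw : ∀ n, q.eval (w n) ≠ 0) {g : ℂ → ℂ → ℂ} (hg : ∀ t, g t ∈ divDegreeLT q N) {U : Set ℂ}
    {μ : ℂ} (heig : ∀ z, q.eval z ≠ 0 → ratEval p q z ∈ U → ratEval p q z ≠ α →
      Rop p q α w (fun ζ => g (ratEval p q ζ) ζ) z = μ * g (ratEval p q z) z)
    {z : ℂ} (hz : q.eval z ≠ 0) (hzU : ratEval p q z ∈ U) :
    g (ratEval p q z) z * (1 - μ * (ratEval p q z - α)) = g α z := by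
  by_cases hzα : ratEval p q z = α
  · rw [hzα, sub_self, mul_zero, sub_zero, mul_one]
  have h := heig z hz hzU hzα
  rw [Rop_apply_of_eq_on_fiber hp hq hw hroot hqw (hg α)
    (fun n => by rw [ratEval_eq_of_eval_eq (hqw n) (hroot n)]) hz hzα,
    div_eq_iff (sub_ne_zero.mpr hzα)] at h
  linear_combination h

end Fiber

theorem derivative_mul_sub_mul_derivative_ne_zero {K : Type*} [Field K] [CharZero K] {p q : K[X]}
    (hco : IsCoprime p q) (hp : 0 < p.natDegree) : p.derivative * q - p * q.derivative ≠ 0 := by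
  intro h
  have hdvd : p ∣ p.derivative := hco.dvd_of_dvd_mul_right ⟨q.derivative, sub_eq_zero.mp h⟩
  have hp' : p.derivative ≠ 0 := fun h0 => hp.ne' (derivative_eq_zero.mp h0)
  exact (natDegree_le_of_dvd hdvd hp').not_gt (natDegree_derivative_lt hp.ne')

theorem eval_ne_zero_of_eval_eq {K : Type*} [Field K] {p q : K[X]} (hco : IsCoprime p q) {t x : K}
    (hpx : p.eval x = t * q.eval x) : q.eval x ≠ 0 := fun h0 => by
  simpa [coe_aeval_eq_eval, hpx, h0] using aeval_ne_zero_of_isCoprime hco x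

/-- `r(∞)` (a junk value when `deg q < deg p`) and the critical values of `r`. -/
def exceptionalValues (p q : ℂ[X]) : Finset ℂ :=
  insert (p.leadingCoeff / q.coeff p.natDegree)
    ((p.derivative * q - p * q.derivative).roots.toFinset.image (ratEval p q))

theorem separable_sub_C_mul {p q : ℂ[X]} (hco : IsCoprime p q) (hp : 0 < p.natDegree) {t : ℂ}
    (ht : t ∉ exceptionalValues p q) : (p - C t * q).Separable := by
  rw [separable_def, isCoprime_iff_aeval_ne_zero_of_isAlgClosed ℂ ℂ]
  intro x
  by_contra! hx
  simp only [coe_aeval_eq_eval, derivative_sub, derivative_C_mul, eval_sub, eval_mul, eval_C,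
    sub_eq_zero] at hx
  obtain ⟨hpx, hpx'⟩ := hx
  have hW := derivative_mul_sub_mul_derivative_ne_zero hco hp
  refine ht (Finset.mem_insert_of_mem (Finset.mem_image.mpr ⟨x, ?_, ?_⟩))
  · rw [Multiset.mem_toFinset, mem_roots hW, IsRoot, eval_sub, eval_mul, eval_mul, hpx, hpx']
    ring
  · exact ratEval_eq_of_eval_eq (eval_ne_zero_of_eval_eq hco hpx) hpx

theorem card_roots_toFinset_sub_C_mul {p q : ℂ[X]} (hco : IsCoprime p q)
    (hdeg : q.natDegree ≤ p.natDegree) {t : ℂ} (ht : t ∉ exceptionalValues p q) :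
    (p - C t * q).roots.toFinset.card = p.natDegree := by
  have hle : (p - C t * q).natDegree ≤ p.natDegree :=
    (natDegree_sub_le_of_le le_rfl ((natDegree_C_mul_le _ _).trans hdeg)).trans (max_self _).le
  rcases Nat.eq_zero_or_pos p.natDegree with h0 | hp
  · rw [h0] at hle ⊢
    rw [eq_C_of_natDegree_le_zero hle, roots_C, Multiset.toFinset_zero, Finset.card_empty]
  have hcoeff : (p - C t * q).coeff p.natDegree ≠ 0 := by
    have hlc : p.leadingCoeff ≠ 0 := leadingCoeff_ne_zero.mpr (ne_zero_of_natDegree_gt hp)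
    rw [coeff_sub, coeff_C_mul, ← leadingCoeff, sub_ne_zero]
    intro h
    by_cases hq : q.coeff p.natDegree = 0
    · exact hlc (by rw [h, hq, mul_zero])
    · exact ht (Finset.mem_insert.mpr (Or.inl (by rw [h, mul_div_cancel_right₀ t hq])))
  rw [Multiset.toFinset_card_of_nodup (nodup_roots (separable_sub_C_mul hco hp ht)),
    IsAlgClosed.card_roots_eq_natDegree, natDegree_eq_of_le_of_coeff_ne_zero hle hcoeff]

theorem sum_mul_mem {K X ι : Type*} [Field K] [Fintype ι] (S : Submodule K (X → K))
    {e : ι → X → K} (he : ∀ n, e n ∈ S) (c : ι → K) : (fun z => ∑ n, e n z * c n) ∈ S := by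
  convert S.sum_mem (t := Finset.univ) fun n _ => S.smul_mem (c n) (he n) using 1
  ext z
  simp [Finset.sum_apply, mul_comm]

theorem eq_zero_of_mem_divDegreeLT {K : Type*} [Field K] {q : K[X]} {N : ℕ} {f : K → K}
    (hf : f ∈ divDegreeLT q N) {s : Finset K} (hs : N ≤ s.card)
    (hfs : ∀ x ∈ s, q.eval x ≠ 0 ∧ f x = 0) {z : K} (hz : q.eval z ≠ 0) : f z = 0 := by
  obtain ⟨G, hG, hfG⟩ := hf
  have hG0 : G = 0 := by
    refine eq_zero_of_degree_lt_of_eval_finset_eq_zero s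
      ((mem_degreeLT.mp hG).trans_le (by exact_mod_cast hs)) fun x hx => ?_
    have h := hfG x (hfs x hx).1
    rwa [(hfs x hx).2, eq_comm, div_eq_zero_iff, or_iff_left (hfs x hx).1] at h
  rw [hfG z hz, hG0, eval_zero, zero_div]

theorem Set.EqOn.of_diff_finite {Y : Type*} [TopologicalSpace Y] [T2Space Y] {U B : Set ℂ}
    (hU : IsOpen U) (hB : B.Finite) {f g : ℂ → Y} (hf : ContinuousOn f U) (hg : ContinuousOn g U)
    (h : Set.EqOn f g (U \ B)) : Set.EqOn f g U :=
  h.of_subset_closure hf hg Set.sdiff_subset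
    ((hB.countable.dense_compl ℂ).open_subset_closure_inter hU)

section Converse

variable {p q : ℂ[X]} {α μ : ℂ} {U : Set ℂ} {g : ℂ → ℂ → ℂ}

theorem apply_mul_eq_of_Rop_eq (hco : IsCoprime p q) (hdeg : q.natDegree ≤ p.natDegree)
    {w : Fin p.natDegree → ℂ} (hw : Function.Injective w)
    (hroot : ∀ n, p.eval (w n) = α * q.eval (w n)) (hqw : ∀ n, q.eval (w n) ≠ 0)
    (hg : ∀ t, g t ∈ divDegreeLT q p.natDegree) (hU : IsOpen U)
    (hcont : ∀ z, ContinuousOn (fun t => g t z) U)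
    (heig : ∀ z, q.eval z ≠ 0 → ratEval p q z ∈ U → ratEval p q z ≠ α →
      Rop p q α w (fun ζ => g (ratEval p q ζ) ζ) z = μ * g (ratEval p q z) z)
    {t : ℂ} (ht : t ∈ U) {z : ℂ} (hz : q.eval z ≠ 0) :
    g t z * (1 - μ * (t - α)) = g α z := by
  have hgeneric : Set.EqOn (fun t => g t z * (1 - μ * (t - α))) (fun _ => g α z)
      (U \ exceptionalValues p q) := by
    rintro t ⟨htU, htE⟩
    have hfiber : ∀ x ∈ (p - C t * q).roots.toFinset,
        q.eval x ≠ 0 ∧ ((1 - μ * (t - α)) • g t - g α) x = 0 := by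
      intro x hx
      rw [Multiset.mem_toFinset, mem_roots', IsRoot, eval_sub, eval_mul, eval_C, sub_eq_zero] at hx
      have hqx := eval_ne_zero_of_eval_eq hco hx.2
      have hxt := ratEval_eq_of_eval_eq hqx hx.2
      refine ⟨hqx, ?_⟩
      have h := apply_ratEval_mul_eq_of_Rop_eq le_rfl hdeg hw hroot hqw hg heig hqx (hxt ▸ htU)
      rw [hxt] at h
      simp only [Pi.sub_apply, Pi.smul_apply, smul_eq_mul]
      linear_combination h
    have h := eq_zero_of_mem_divDegreeLT (sub_mem (Submodule.smul_mem _ _ (hg t)) (hg α))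
      (card_roots_toFinset_sub_C_mul hco hdeg htE).ge hfiber hz
    simp only [Pi.sub_apply, Pi.smul_apply, smul_eq_mul] at h
    linear_combination h
  exact hgeneric.of_diff_finite hU (exceptionalValues p q).finite_toSet (by fun_prop)
    continuousOn_const ht

theorem apply_ratEval_eq_div_of_Rop_eq (hco : IsCoprime p q) (hdeg : q.natDegree ≤ p.natDegree)
    {w : Fin p.natDegree → ℂ} (hw : Function.Injective w)
    (hroot : ∀ n, p.eval (w n) = α * q.eval (w n)) (hqw : ∀ n, q.eval (w n) ≠ 0)
    (hg : ∀ t, g t ∈ divDegreeLT q p.natDegree) (hU : IsOpen U)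
    (hcont : ∀ z, ContinuousOn (fun t => g t z) U)
    (heig : ∀ z, q.eval z ≠ 0 → ratEval p q z ∈ U → ratEval p q z ≠ α →
      Rop p q α w (fun ζ => g (ratEval p q ζ) ζ) z = μ * g (ratEval p q z) z)
    {z : ℂ} (hz : q.eval z ≠ 0) (hzU : ratEval p q z ∈ U) :
    g (ratEval p q z) z = g α z / (1 - μ * (ratEval p q z - α)) := by
  have key {t : ℂ} (ht : t ∈ U) : g t z * (1 - μ * (t - α)) = g α z :=
    apply_mul_eq_of_Rop_eq hco hdeg hw hroot hqw hg hU hcont heig ht hz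
  by_cases hd : 1 - μ * (ratEval p q z - α) = 0
  -- the division is junk `0` here; `g t z` vanishes for `t ≠ r z`, so at `r z` by continuity
  · have hgα : g α z = 0 := by rw [← key hzU, hd, mul_zero]
    have hμ : μ ≠ 0 := by rintro rfl; simp at hd
    rw [hd, div_zero]
    refine Set.EqOn.of_diff_finite hU (Set.finite_singleton _) (hcont z) continuousOn_const
      (fun s (⟨hsU, hs⟩ : s ∈ U \ {ratEval p q z}) => ?_) hzU
    refine (mul_eq_zero.mp ((key hsU).trans hgα)).resolve_right fun h => hs ?_
    have : μ * (s - ratEval p q z) = 0 := by linear_combination hd - h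
    exact sub_eq_zero.mp ((mul_eq_zero.mp this).resolve_left hμ)
  · rw [eq_div_iff hd]
    exact key hzU

end Converse

theorem stmt14_general (p q : Polynomial ℂ) (hco : IsCoprime p q) (N : ℕ)
    (hN : p.natDegree = N) (hdeg : q.natDegree ≤ p.natDegree)
    (e : Fin N → (ℂ → ℂ)) (hmem : ∀ n, e n ∈ stateSpace p q)
    (α : ℂ) (w : Fin N → ℂ) (hw : Function.Injective w)
    (hroot : ∀ n, p.eval (w n) = α * q.eval (w n)) (hq : ∀ n, q.eval (w n) ≠ 0) :
    -- forward direction: eigenvector property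
    (∀ a b : ℂ, a - α * b ≠ 0 → ∀ c : Fin N → ℂ, c ≠ 0 →
      ∀ z : ℂ, q.eval z ≠ 0 → ratEval p q z ≠ α → a - ratEval p q z * b ≠ 0 →
        Rop p q α w (fun ζ => (∑ n : Fin N, e n ζ * c n) / (a - ratEval p q ζ * b)) z
          = (b / (a - α * b)) *
              ((∑ n : Fin N, e n z * c n) / (a - ratEval p q z * b))) ∧
    -- converse: every eigenvector of the form `Z_r F(r)` is of this form
    (∀ (U : Set ℂ), IsOpen U → IsConnected U → α ∈ U →
      ∀ F : Fin N → ℂ → ℂ, (∀ n, AnalyticOnNhd ℂ (F n) U) →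
      ∀ μ : ℂ,
        (∀ z : ℂ, q.eval z ≠ 0 → ratEval p q z ∈ U → ratEval p q z ≠ α →
          Rop p q α w (fun ζ => ∑ n : Fin N, e n ζ * F n (ratEval p q ζ)) z
            = μ * ∑ n : Fin N, e n z * F n (ratEval p q z)) →
        (∃ z : ℂ, q.eval z ≠ 0 ∧ ratEval p q z ∈ U ∧
          (∑ n : Fin N, e n z * F n (ratEval p q z)) ≠ 0) →
        ∃ a b : ℂ, ∃ c : Fin N → ℂ, a - α * b ≠ 0 ∧ c ≠ 0 ∧ μ = b / (a - α * b) ∧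
          ∀ z : ℂ, q.eval z ≠ 0 → ratEval p q z ∈ U →
            ∑ n : Fin N, e n z * F n (ratEval p q z)
              = (∑ n : Fin N, e n z * c n) / (a - ratEval p q z * b)) := by
  subst hN
  have he n : e n ∈ divDegreeLT q p.natDegree := stateSpace_le_divDegreeLT le_rfl hdeg (hmem n)
  refine ⟨fun a b hab c _ z hz hzα hzab =>
    Rop_div_eq_mul le_rfl hdeg hw hroot hq (sum_mul_mem _ he c) hab hz hzα hzab, ?_⟩
  intro U hU _ _ F hF μ heig ⟨z₀, hz₀, hz₀U, hf₀⟩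
  have hcont z : ContinuousOn (fun t => ∑ n, e n z * F n t) U := by
    have := fun n => (hF n).continuousOn
    fun_prop
  have hform {z} := apply_ratEval_eq_div_of_Rop_eq (z := z) hco hdeg hw hroot hq
    (fun t => sum_mul_mem _ he (F · t)) hU hcont heig
  have hab : 1 + μ * α - α * μ = 1 := by ring
  refine ⟨1 + μ * α, μ, (F · α), by simp [hab], fun hc => hf₀ ?_, by rw [hab, div_one],
    fun z hz hzU => ?_⟩
  · rw [hform hz₀ hz₀U, Finset.sum_eq_zero fun n _ => by simp [congrFun hc n], zero_div]
  · rw [hform hz hzU]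
    congr 1
    ring

/-- the functions `f(z) = Z_r(z)c/(a − r(z)b)` (with `a − αb ≠ 0`,
`c ≠ 0`) are eigenvectors of `R^{(r)}_α` with eigenvalue `b/(a − αb)`, and
conversely every eigenvector of `R^{(r)}_α` of the form `Z_r(z)F(r(z))`
(`F` analytic near `α`) is of this form. -/
theorem stmt14 (p q : Polynomial ℂ) (hco : IsCoprime p q) (N : ℕ)
    (hN : p.natDegree = N) (hdeg : q.natDegree ≤ p.natDegree)
    (e : Fin N → (ℂ → ℂ)) (hmem : ∀ n, e n ∈ stateSpace p q)
    (hli : LinearIndependent ℂ e)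
    (hspan : Submodule.span ℂ (Set.range e) = stateSpace p q)
    (α : ℂ) (w : Fin N → ℂ) (hw : Function.Injective w)
    (hroot : ∀ n, p.eval (w n) = α * q.eval (w n)) (hq : ∀ n, q.eval (w n) ≠ 0) :
    -- forward direction: eigenvector property
    (∀ a b : ℂ, a - α * b ≠ 0 → ∀ c : Fin N → ℂ, c ≠ 0 →
      ∀ z : ℂ, q.eval z ≠ 0 → ratEval p q z ≠ α → a - ratEval p q z * b ≠ 0 →
        Rop p q α w (fun ζ => (∑ n : Fin N, e n ζ * c n) / (a - ratEval p q ζ * b)) z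
          = (b / (a - α * b)) *
              ((∑ n : Fin N, e n z * c n) / (a - ratEval p q z * b))) ∧
    -- converse: every eigenvector of the form `Z_r F(r)` is of this form
    (∀ (U : Set ℂ), IsOpen U → IsConnected U → α ∈ U →
      ∀ F : Fin N → ℂ → ℂ, (∀ n, AnalyticOnNhd ℂ (F n) U) →
      ∀ μ : ℂ,
        (∀ z : ℂ, q.eval z ≠ 0 → ratEval p q z ∈ U → ratEval p q z ≠ α →
          Rop p q α w (fun ζ => ∑ n : Fin N, e n ζ * F n (ratEval p q ζ)) z
            = μ * ∑ n : Fin N, e n z * F n (ratEval p q z)) →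
        (∃ z : ℂ, q.eval z ≠ 0 ∧ ratEval p q z ∈ U ∧
          (∑ n : Fin N, e n z * F n (ratEval p q z)) ≠ 0) →
        ∃ a b : ℂ, ∃ c : Fin N → ℂ, a - α * b ≠ 0 ∧ c ≠ 0 ∧ μ = b / (a - α * b) ∧
          ∀ z : ℂ, q.eval z ≠ 0 → ratEval p q z ∈ U →
            ∑ n : Fin N, e n z * F n (ratEval p q z)
              = (∑ n : Fin N, e n z * c n) / (a - ratEval p q z * b)) :=
  stmt14_general p q hco N hN hdeg e hmem α w hw hroot hq

end
end
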